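/- arXiv:2004.05733 — 3 statements merged into one kernel-verified Lean document; each statement's English description precedes it below -/
import Mathlib

section
/- For every real x with 0 ≤ x ≤ 1 and every natural number λ ≥ 1, 1 - (1 - x)^λ ≥ 1 - 1/(λx + 1) = λx/(λx + 1). -/
/-! Bernoulli's inequality gives `1 + λx ≤ (1 + x)^λ`, hence
`(1 - x)^λ (1 + λx) ≤ (1 - x²)^λ ≤ 1`, i.e. `(1 - x)^λ ≤ 1 / (λx + 1)`. -/

lemma one_sub_pow_mul_natCast_mul_add_one_le_one {x : ℝ} (hx0 : -1 ≤ x) (hx1 : x ≤ 1) (n : ℕ) :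
    (1 - x) ^ n * ((n : ℝ) * x + 1) ≤ 1 := by
  have bernoulli : (n : ℝ) * x + 1 ≤ (1 + x) ^ n := by
    linarith [one_add_mul_le_pow (by linarith : (-2 : ℝ) ≤ x) n]
  calc (1 - x) ^ n * ((n : ℝ) * x + 1)
      ≤ (1 - x) ^ n * (1 + x) ^ n := by gcongr
    _ = (1 - x ^ 2) ^ n := by rw [← mul_pow]; ring
    _ ≤ 1 := pow_le_one₀ (by nlinarith) (by nlinarith)

theorem stmt_9_general (x : ℝ) (hx0 : 0 ≤ x) (hx1 : x ≤ 1) (l : ℕ) :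
    (1 - 1 / ((l : ℝ) * x + 1) = (l : ℝ) * x / ((l : ℝ) * x + 1))
    ∧ (l : ℝ) * x / ((l : ℝ) * x + 1) ≤ 1 - (1 - x) ^ l := by
  have hpos : 0 < (l : ℝ) * x + 1 := by positivity
  have heq : 1 - 1 / ((l : ℝ) * x + 1) = (l : ℝ) * x / ((l : ℝ) * x + 1) := by
    rw [one_sub_div hpos.ne', add_sub_cancel_right]
  refine ⟨heq, ?_⟩
  have hpow : (1 - x) ^ l ≤ 1 / ((l : ℝ) * x + 1) := by
    rw [le_div_iff₀ hpos]
    exact one_sub_pow_mul_natCast_mul_add_one_le_one (by linarith) hx1 l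
  linarith

theorem stmt_9 (x : ℝ) (hx0 : 0 ≤ x) (hx1 : x ≤ 1) (l : ℕ) (hl : 1 ≤ l) :
    (1 - 1 / ((l : ℝ) * x + 1) = (l : ℝ) * x / ((l : ℝ) * x + 1))
    ∧ (l : ℝ) * x / ((l : ℝ) * x + 1) ≤ 1 - (1 - x) ^ l :=
  stmt_9_general x hx0 hx1 l
end

section
/- Main exponential upper bound: Let A be a single-trajectory search algorithm on {0,1}^n producing search points x^(0), x^(1), ..., and let x* ∈ {0,1}^n. Suppose there is 0 < c ≤ 1 such that for every t ≥ 1 and all x, z ∈ {0,1}^n with x ≠ x*, H(x,z) = 1, and H(z,x*) = H(x,x*) - 1, conditionally on any history with x^(t-1) = x we have Pr[x^(t) = z] ≥ c/n. Then T = min{t : x^(t) = x*} is stochastically dominated by n times a geometric random variable with success probability (c/e)^n; in particular E[T] ≤ n(e/c)^n. -/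
/-!
From a point at Hamming distance `d` from `x*`, the `d` coordinates still to be corrected can be
fixed one per step in any of `d!` orders, and each such path is followed with probability at least
`(c/n)^d`; hence `x*` is reached within `d` steps with probability at least
`d! (c/n)^d ≥ (c/e)^n`, using `n^d / d! ≤ e^n`. Since `d ≤ n`, whatever the past, each block of
`n` steps hits `x*` with probability at least `p = (c/e)^n`, so `T > nk` has probability at most
`(1-p)^k`, and summing these tails gives `E[T] ≤ n/p`.
-/

open MeasureTheory
open scoped ENNReal Nat

section Hamming

variable {ι : Type*} [Fintype ι] [DecidableEq ι] {β : ι → Type*} [∀ i, DecidableEq (β i)]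
  {s y : ∀ i, β i} {i : ι}

theorem hammingDist_update_eq_one (h : s i ≠ y i) :
    hammingDist s (Function.update s i (y i)) = 1 := by
  rw [hammingDist, Finset.card_eq_one]
  refine ⟨i, Finset.ext fun j => ?_⟩
  by_cases hj : j = i <;> simp [Function.update, hj, h]

theorem hammingDist_update_add_one (h : s i ≠ y i) :
    hammingDist (Function.update s i (y i)) y + 1 = hammingDist s y := by
  have hmem : i ∈ ({j | s j ≠ y j} : Finset ι) := by simp [h]
  have herase : ({j | Function.update s i (y i) j ≠ y j} : Finset ι) =
      ({j | s j ≠ y j} : Finset ι).erase i := by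
    ext j
    by_cases hj : j = i <;> simp [Function.update, hj]
  rw [hammingDist, hammingDist, herase, Finset.card_erase_add_one hmem]

end Hamming

section Fibers

variable {Ω β : Type*} [MeasurableSpace Ω] {μ : Measure Ω} {f : Ω → β}

theorem sum_measure_inter_preimage_singleton (S : Finset β)
    (hf : ∀ b ∈ S, MeasurableSet (f ⁻¹' {b})) (A : Set Ω) :
    ∑ b ∈ S, μ (A ∩ f ⁻¹' {b}) = μ (A ∩ f ⁻¹' S) := by
  have hS : MeasurableSet (f ⁻¹' S) := by
    rw [← Finset.set_biUnion_preimage_singleton]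
    exact Finset.measurableSet_biUnion S hf
  have := sum_measure_preimage_singleton (μ := μ.restrict A) S hf
  rw [Measure.restrict_apply hS, Finset.sum_congr rfl fun b hb => Measure.restrict_apply (hf b hb)]
    at this
  simpa only [Set.inter_comm] using this

theorem sum_measure_inter_preimage_singleton_le (S : Finset β)
    (hf : ∀ b ∈ S, MeasurableSet (f ⁻¹' {b})) (A : Set Ω) :
    ∑ b ∈ S, μ (A ∩ f ⁻¹' {b}) ≤ μ A :=
  (sum_measure_inter_preimage_singleton S hf A).trans_le (measure_mono Set.inter_subset_left)

theorem measure_eq_sum_inter_preimage_singleton [Fintype β]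
    (hf : ∀ b, MeasurableSet (f ⁻¹' {b})) (A : Set Ω) :
    μ A = ∑ b, μ (A ∩ f ⁻¹' {b}) := by
  rw [sum_measure_inter_preimage_singleton _ fun b _ => hf b, Finset.coe_univ, Set.preimage_univ,
    Set.inter_univ]

end Fibers

theorem pow_le_factorial_mul_div_pow {n d : ℕ} (hd : d ≤ n) {c : ℝ} (hc0 : 0 ≤ c) (hc1 : c ≤ 1) :
    (c / Real.exp 1) ^ n ≤ d ! * (c / n) ^ d := by
  obtain rfl | hn := Nat.eq_zero_or_pos n
  · simp [Nat.le_zero.1 hd]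
  have hexp : (n : ℝ) ^ d / Real.exp 1 ^ n ≤ d ! := by
    rw [← Real.exp_nat_mul, mul_one, div_le_iff₀ (by positivity), ← div_le_iff₀' (by positivity)]
    exact Real.pow_div_factorial_le_exp _ (Nat.cast_nonneg n) d
  calc (c / Real.exp 1) ^ n ≤ c ^ d / Real.exp 1 ^ n := by
        rw [div_pow]
        exact div_le_div_of_nonneg_right (pow_le_pow_of_le_one hc0 hc1 hd) (by positivity)
    _ = (c / n) ^ d * ((n : ℝ) ^ d / Real.exp 1 ^ n) := by
        rw [mul_div_assoc', div_pow, div_mul_cancel₀ _ (by positivity)]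
    _ ≤ (c / n) ^ d * d ! := by gcongr
    _ = d ! * (c / n) ^ d := mul_comm _ _

section Hitting

variable {Ω α : Type*} {x : ℕ → Ω → α} {a : α}

def hitsWithin (x : ℕ → Ω → α) (a : α) (t d : ℕ) : Set Ω := {ω | ∃ j ≤ d, x (t + j) ω = a}

/-- Equals `⊤` on paths that never visit `a`. -/
noncomputable def firstHitTime (x : ℕ → Ω → α) (a : α) (ω : Ω) : ℝ≥0∞ :=
  ⨅ (t : ℕ) (_ : x t ω = a), (t : ℝ≥0∞)

@[simp]
theorem mem_hitsWithin {ω : Ω} {t d : ℕ} :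
    ω ∈ hitsWithin x a t d ↔ ∃ j ≤ d, x (t + j) ω = a :=
  Iff.rfl

theorem hitsWithin_mono {t d e : ℕ} (h : d ≤ e) : hitsWithin x a t d ⊆ hitsWithin x a t e :=
  fun _ ⟨j, hj, hx⟩ => ⟨j, hj.trans h, hx⟩

theorem hitsWithin_add_subset (t d e : ℕ) :
    hitsWithin x a (t + d) e ⊆ hitsWithin x a t (d + e) :=
  fun _ ⟨j, hj, hx⟩ => ⟨d + j, by omega, by rwa [← add_assoc]⟩

theorem measurableSet_hitsWithin [MeasurableSpace α] [MeasurableSingletonClass α]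
    {m : MeasurableSpace Ω} {t d : ℕ} (hx : ∀ j ≤ d, Measurable[m] (x (t + j))) :
    MeasurableSet[m] (hitsWithin x a t d) := by
  have : hitsWithin x a t d = ⋃ j ∈ Set.Iic d, x (t + j) ⁻¹' {a} := by
    ext; simp [hitsWithin]
  rw [this]
  exact MeasurableSet.biUnion (Set.to_countable _) fun j hj => hx j hj (measurableSet_singleton a)

theorem measurableSet_hitsWithin_of_le [m0 : MeasurableSpace Ω] [MeasurableSpace α]
    [MeasurableSingletonClass α] {ℱ : Filtration ℕ m0} (hadapt : ∀ t, Measurable[ℱ t] (x t))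
    {t d u : ℕ} (h : t + d ≤ u) :
    MeasurableSet[ℱ u] (hitsWithin x a t d) :=
  measurableSet_hitsWithin fun j hj => (hadapt _).mono (ℱ.mono (by omega)) le_rfl

theorem measure_compl_hitsWithin_le [m0 : MeasurableSpace Ω] [MeasurableSpace α]
    [MeasurableSingletonClass α] {μ : Measure Ω} [IsFiniteMeasure μ] {ℱ : Filtration ℕ m0}
    (hadapt : ∀ t, Measurable[ℱ t] (x t)) {m : ℕ} {p : ℝ≥0∞}
    (hblock : ∀ t A, MeasurableSet[ℱ t] A → p * μ A ≤ μ (A ∩ hitsWithin x a t m))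
    (t₀ k : ℕ) : μ (hitsWithin x a t₀ (m * k))ᶜ ≤ (1 - p) ^ k * μ Set.univ := by
  induction k with
  | zero => simpa using measure_mono (Set.subset_univ _)
  | succ k ih =>
    set B := (hitsWithin x a t₀ (m * k))ᶜ
    set H := hitsWithin x a (t₀ + m * k) m
    have hB : MeasurableSet[ℱ (t₀ + m * k)] B :=
      (measurableSet_hitsWithin_of_le hadapt le_rfl).compl
    have hH : MeasurableSet H := ℱ.le _ _ (measurableSet_hitsWithin_of_le hadapt le_rfl)
    have hsub : (hitsWithin x a t₀ (m * (k + 1)))ᶜ ⊆ B \ H := by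
      rw [mul_add_one]
      exact fun ω hω => ⟨fun h => hω (hitsWithin_mono (by omega) h),
        fun h => hω (hitsWithin_add_subset _ _ _ h)⟩
    calc μ (hitsWithin x a t₀ (m * (k + 1)))ᶜ ≤ μ (B \ H) := measure_mono hsub
      _ = μ B - μ (B ∩ H) :=
        ENNReal.eq_sub_of_add_eq (measure_ne_top μ _) (measure_sdiff_add_inter B hH)
      _ ≤ μ B - p * μ B := tsub_le_tsub_left (hblock _ B hB) _
      _ = (1 - p) * μ B := by rw [ENNReal.sub_mul fun _ _ => measure_ne_top μ B, one_mul]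
      _ ≤ (1 - p) * ((1 - p) ^ k * μ Set.univ) := by gcongr
      _ = (1 - p) ^ (k + 1) * μ Set.univ := by ring

theorem firstHitTime_le_tsum_indicator {m : ℕ} (hm : m ≠ 0) (ω : Ω) :
    firstHitTime x a ω ≤ ∑' k, (hitsWithin x a 0 (m * k))ᶜ.indicator (fun _ => (m : ℝ≥0∞)) ω := by
  by_cases h : ∃ k, ω ∈ hitsWithin x a 0 (m * k)
  · classical
    obtain ⟨t, ht, hxt⟩ := Nat.find_spec h
    have hbefore : ∀ k ∈ Finset.range (Nat.find h), ω ∈ (hitsWithin x a 0 (m * k))ᶜ :=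
      fun k hk => Nat.find_min h (Finset.mem_range.1 hk)
    calc firstHitTime x a ω ≤ t := iInf₂_le t (by simpa using hxt)
      _ ≤ (m * Nat.find h : ℕ) := by exact_mod_cast ht
      _ = ∑ k ∈ Finset.range (Nat.find h),
            (hitsWithin x a 0 (m * k))ᶜ.indicator (fun _ => (m : ℝ≥0∞)) ω := by
        rw [Finset.sum_congr rfl fun k hk => Set.indicator_of_mem (hbefore k hk) _]
        simp [mul_comm]
      _ ≤ _ := ENNReal.sum_le_tsum _
  · simp only [not_exists] at h
    rw [tsum_congr fun k => Set.indicator_of_mem (h k) _,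
      ENNReal.tsum_const_eq_top_of_ne_zero (Nat.cast_ne_zero.2 hm)]
    exact le_top

theorem lintegral_firstHitTime_le [MeasurableSpace Ω] [MeasurableSpace α]
    [MeasurableSingletonClass α] {μ : Measure Ω}
    (hx : ∀ t, Measurable (x t)) {m : ℕ} (hm : m ≠ 0) {r : ℝ≥0∞}
    (htail : ∀ k, μ (hitsWithin x a 0 (m * k))ᶜ ≤ r ^ k) :
    ∫⁻ ω, firstHitTime x a ω ∂μ ≤ m * (1 - r)⁻¹ := by
  have hE : ∀ k, MeasurableSet (hitsWithin x a 0 (m * k))ᶜ :=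
    fun k => (measurableSet_hitsWithin fun j _ => hx _).compl
  calc ∫⁻ ω, firstHitTime x a ω ∂μ
      ≤ ∫⁻ ω, ∑' k, (hitsWithin x a 0 (m * k))ᶜ.indicator (fun _ => (m : ℝ≥0∞)) ω ∂μ :=
        lintegral_mono (firstHitTime_le_tsum_indicator hm)
    _ = ∑' k, m * μ (hitsWithin x a 0 (m * k))ᶜ := by
        rw [lintegral_tsum fun k => (measurable_const.indicator (hE k)).aemeasurable]
        simp_rw [lintegral_indicator_const (hE _)]
    _ ≤ ∑' k, m * r ^ k := ENNReal.tsum_le_tsum fun k => by gcongr; exact htail k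
    _ = m * (1 - r)⁻¹ := by rw [ENNReal.tsum_mul_left, ENNReal.tsum_geometric]

end Hitting

section Cube

variable {Ω ι β : Type*} [m0 : MeasurableSpace Ω] [Fintype ι] [DecidableEq ι] [DecidableEq β]
  [MeasurableSpace β] [MeasurableSingletonClass β]
  {μ : Measure Ω} {ℱ : Filtration ℕ m0} {x : ℕ → Ω → (ι → β)} {xs : ι → β}

/-- Condition (Acc) with `Pr[x (t+1) = z | past] ≥ q` expressed through the past events `A` on
which `x t = s`. -/
def AccCondition (μ : Measure Ω) (ℱ : Filtration ℕ m0) (x : ℕ → Ω → (ι → β)) (xs : ι → β)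
    (q : ℝ≥0∞) : Prop :=
  ∀ t s z, s ≠ xs → hammingDist s z = 1 → hammingDist z xs + 1 = hammingDist s xs →
    ∀ A, MeasurableSet[ℱ t] A → A ⊆ {ω | x t ω = s} → q * μ A ≤ μ (A ∩ {ω | x (t + 1) ω = z})

theorem factorial_mul_pow_mul_le_measure_inter_hitsWithin
    (hadapt : ∀ t, Measurable[ℱ t] (x t)) {q : ℝ≥0∞} (hacc : AccCondition μ ℱ x xs q)
    {t : ℕ} {s : ι → β} {A : Set Ω} (hA : MeasurableSet[ℱ t] A) (hAs : A ⊆ {ω | x t ω = s}) :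
    (hammingDist s xs)! * q ^ hammingDist s xs * μ A
      ≤ μ (A ∩ hitsWithin x xs t (hammingDist s xs)) := by
  induction hd : hammingDist s xs generalizing t s A with
  | zero =>
    obtain rfl := hammingDist_eq_zero.1 hd
    rw [Set.inter_eq_left.2 fun ω hω => mem_hitsWithin.2 ⟨0, le_rfl, hAs hω⟩]
    simp
  | succ d ih =>
    have hs : s ≠ xs := fun h => by simp [h] at hd
    set F : Finset ι := {i | s i ≠ xs i}
    have hF : F.card = d + 1 := hd
    set z : ι → ι → β := fun i => Function.update s i (xs i)
    have hz : Set.InjOn z F := by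
      intro i hi i' _ h
      by_contra hne
      have := congrFun h i
      simp only [z, Function.update_self, Function.update_of_ne hne] at this
      exact (Finset.mem_filter.1 hi).2 this.symm
    have hsucc : hitsWithin x xs (t + 1) d ⊆ hitsWithin x xs t (d + 1) :=
      add_comm 1 d ▸ hitsWithin_add_subset t 1 d
    set C := A ∩ hitsWithin x xs t (d + 1)
    have hstep : ∀ i ∈ F, d ! * q ^ d * q * μ A ≤ μ (C ∩ {ω | x (t + 1) ω = z i}) := by
      intro i hi
      have hi' : s i ≠ xs i := (Finset.mem_filter.1 hi).2
      set B := A ∩ {ω | x (t + 1) ω = z i}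
      have hB : MeasurableSet[ℱ (t + 1)] B :=
        (ℱ.mono t.le_succ _ hA).inter (hadapt _ (measurableSet_singleton _))
      have hzd : hammingDist (z i) xs = d := by
        have : hammingDist (z i) xs + 1 = d + 1 := (hammingDist_update_add_one hi').trans hd
        omega
      calc d ! * q ^ d * q * μ A = d ! * q ^ d * (q * μ A) := mul_assoc _ _ _
        _ ≤ d ! * q ^ d * μ B := by
          gcongr
          exact hacc t s (z i) hs (hammingDist_update_eq_one hi') (hammingDist_update_add_one hi')
            A hA hAs
        _ ≤ μ (B ∩ hitsWithin x xs (t + 1) d) := ih hB Set.inter_subset_right hzd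
        _ ≤ μ (C ∩ {ω | x (t + 1) ω = z i}) :=
          measure_mono fun ω ⟨⟨hωA, hωz⟩, hωhit⟩ => ⟨⟨hωA, hsucc hωhit⟩, hωz⟩
    calc ((d + 1)! * q ^ (d + 1) * μ A) = ∑ i ∈ F, d ! * q ^ d * q * μ A := by
          rw [Finset.sum_const, hF, nsmul_eq_mul, Nat.factorial_succ]
          push_cast
          ring
      _ ≤ ∑ i ∈ F, μ (C ∩ {ω | x (t + 1) ω = z i}) := Finset.sum_le_sum hstep
      _ = ∑ b ∈ F.image z, μ (C ∩ x (t + 1) ⁻¹' {b}) := 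
          (Finset.sum_image (f := fun b => μ (C ∩ x (t + 1) ⁻¹' {b})) hz).symm
      _ ≤ μ C := sum_measure_inter_preimage_singleton_le _
          (fun b _ => ℱ.le _ _ (hadapt _ (measurableSet_singleton b))) C

theorem ofReal_pow_mul_le_measure_inter_hitsWithin [Fintype β] (hadapt : ∀ t, Measurable[ℱ t] (x t))
    {c : ℝ} (hc0 : 0 ≤ c) (hc1 : c ≤ 1)
    (hacc : AccCondition μ ℱ x xs (ENNReal.ofReal (c / Fintype.card ι)))
    {t : ℕ} {A : Set Ω} (hA : MeasurableSet[ℱ t] A) :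
    ENNReal.ofReal ((c / Real.exp 1) ^ Fintype.card ι) * μ A
      ≤ μ (A ∩ hitsWithin x xs t (Fintype.card ι)) := by
  have hfib : ∀ s, MeasurableSet[ℱ t] (x t ⁻¹' {s}) := fun s => hadapt t (measurableSet_singleton s)
  rw [measure_eq_sum_inter_preimage_singleton (fun s => ℱ.le t _ (hfib s)) A,
    measure_eq_sum_inter_preimage_singleton (fun s => ℱ.le t _ (hfib s)) (A ∩ _), Finset.mul_sum]
  gcongr with s
  have hd : hammingDist s xs ≤ Fintype.card ι := hammingDist_le_card_fintype
  calc ENNReal.ofReal ((c / Real.exp 1) ^ Fintype.card ι) * μ (A ∩ x t ⁻¹' {s})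
      ≤ (hammingDist s xs)! * ENNReal.ofReal (c / Fintype.card ι) ^ hammingDist s xs
          * μ (A ∩ x t ⁻¹' {s}) := by
        gcongr
        rw [← ENNReal.ofReal_natCast, ← ENNReal.ofReal_pow (by positivity),
          ← ENNReal.ofReal_mul (by positivity)]
        exact ENNReal.ofReal_le_ofReal (pow_le_factorial_mul_div_pow hd hc0 hc1)
    _ ≤ μ (A ∩ x t ⁻¹' {s} ∩ hitsWithin x xs t (hammingDist s xs)) :=
        factorial_mul_pow_mul_le_measure_inter_hitsWithin hadapt hacc (hA.inter (hfib s))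
          Set.inter_subset_right
    _ ≤ μ (A ∩ hitsWithin x xs t (Fintype.card ι) ∩ x t ⁻¹' {s}) :=
        measure_mono fun ω ⟨⟨hωA, hωs⟩, hωhit⟩ => ⟨⟨hωA, hitsWithin_mono hd hωhit⟩, hωs⟩

end Cube

theorem stmt_15 {Ω : Type*} [m0 : MeasurableSpace Ω] (μ : Measure Ω) [IsProbabilityMeasure μ]
    (n : ℕ) (hn : 1 ≤ n) (ℱ : Filtration ℕ m0)
    (x : ℕ → Ω → (Fin n → Bool)) (hadapt : ∀ t, Measurable[ℱ t] (x t))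
    (xs : Fin n → Bool) (c : ℝ) (hc0 : 0 < c) (hc1 : c ≤ 1)
    (hacc : ∀ t : ℕ, 1 ≤ t → ∀ s z : Fin n → Bool, s ≠ xs →
      hammingDist s z = 1 → hammingDist z xs + 1 = hammingDist s xs →
      ∀ A : Set Ω, MeasurableSet[ℱ (t - 1)] A → A ⊆ {ω | x (t - 1) ω = s} →
      ENNReal.ofReal (c / n) * μ A ≤ μ (A ∩ {ω | x t ω = z})) :
    (∀ k : ℕ, μ {ω | ∀ t ≤ n * k, x t ω ≠ xs}
        ≤ ENNReal.ofReal ((1 - (c / Real.exp 1) ^ n) ^ k))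
    ∧ ∫⁻ ω, (⨅ (t : ℕ) (_ : x t ω = xs), (t : ℝ≥0∞)) ∂μ
        ≤ ENNReal.ofReal (n * (Real.exp 1 / c) ^ n) := by
  set P := (c / Real.exp 1) ^ n with hP
  have hP0 : 0 < P := by positivity
  have hP1 : P ≤ 1 :=
    pow_le_one₀ (by positivity)
      ((div_le_one (Real.exp_pos 1)).2 (hc1.trans (Real.one_le_exp zero_le_one)))
  have hAcc : AccCondition μ ℱ x xs (ENNReal.ofReal (c / Fintype.card (Fin n))) := by
    rw [Fintype.card_fin]
    exact fun t s z hs h1 h2 A hA hAs => hacc (t + 1) (Nat.le_add_left 1 t) s z hs h1 h2 A hA hAs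
  have hblock : ∀ t A, MeasurableSet[ℱ t] A →
      ENNReal.ofReal P * μ A ≤ μ (A ∩ hitsWithin x xs t n) := by
    simpa only [Fintype.card_fin] using fun t A hA =>
      ofReal_pow_mul_le_measure_inter_hitsWithin hadapt hc0.le hc1 hAcc (t := t) (A := A) hA
  have htail : ∀ k, μ (hitsWithin x xs 0 (n * k))ᶜ ≤ (1 - ENNReal.ofReal P) ^ k := by
    simpa only [measure_univ, mul_one] using measure_compl_hitsWithin_le hadapt hblock 0
  refine ⟨fun k => ?_, ?_⟩
  · have hset : {ω | ∀ t ≤ n * k, x t ω ≠ xs} = (hitsWithin x xs 0 (n * k))ᶜ := by ext; simp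
    rw [hset, ENNReal.ofReal_pow (sub_nonneg.2 hP1), ENNReal.ofReal_sub _ hP0.le,
      ENNReal.ofReal_one]
    exact htail k
  · calc ∫⁻ ω, firstHitTime x xs ω ∂μ ≤ n * (1 - (1 - ENNReal.ofReal P))⁻¹ :=
          lintegral_firstHitTime_le (fun t => (hadapt t).mono (ℱ.le t) le_rfl) (by omega) htail
      _ = ENNReal.ofReal (n * (Real.exp 1 / c) ^ n) := by
        rw [ENNReal.sub_sub_cancel ENNReal.one_ne_top (ENNReal.ofReal_le_one.2 hP1),
          ← ENNReal.ofReal_inv_of_pos hP0, ← ENNReal.ofReal_natCast,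
          ← ENNReal.ofReal_mul (Nat.cast_nonneg n), hP, ← inv_pow, inv_div]
end

section
/- Let q ∈ [0,1) and n ≥ 1, and let x, y ∈ {0,1}^n differ in exactly one position i with x_i = 0, y_i = 1. Let m^x, m^y ∈ {0,1}^n be independent random vectors whose bits are independently 1 with probability q each. Then Pr[OneMax(x ⊕ m^x) < OneMax(y ⊕ m^y)] ≥ (1-q)²/2. -/
/-!
Condition on bit `i` being undisturbed in both noise vectors, which happens with probability
`(1 - q)²`. Then `y ⊕ mʸ` is `x ⊕ mʸ` with one extra one-bit, so it suffices that
`OneMax (x ⊕ mˣ) ≤ OneMax (x ⊕ mʸ)`. The noise vectors are i.i.d., so the law of `(mˣ, mʸ)` is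
invariant under swapping them; hence this event and its mirror image have the same probability,
and together they cover the conditioning event.
-/

open MeasureTheory ProbabilityTheory

def oneMax {n : ℕ} (x : Fin n → Bool) : ℕ :=
  (Finset.univ.filter fun i => x i = true).card

lemma oneMax_eq_succ_of_eq_off {n : ℕ} {u v : Fin n → Bool} {i : Fin n}
    (hu : u i = false) (hv : v i = true) (huv : ∀ j, j ≠ i → u j = v j) :
    oneMax v = oneMax u + 1 := by
  have hfilter : Finset.univ.filter (fun j => v j = true)
      = insert i (Finset.univ.filter fun j => u j = true) := by
    ext j
    by_cases hj : j = i
    · simp [hj, hv]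
    · simp [hj, huv j hj]
  rw [oneMax, oneMax, hfilter, Finset.card_insert_of_notMem (by simp [hu])]

lemma oneMax_xor_lt_of_le {n : ℕ} {x y m m' : Fin n → Bool} {i : Fin n}
    (hxi : x i = false) (hyi : y i = true) (hxy : ∀ j, j ≠ i → x j = y j) (hm' : m' i = false)
    (hle : oneMax (fun j => xor (x j) (m j)) ≤ oneMax (fun j => xor (x j) (m' j))) :
    oneMax (fun j => xor (x j) (m j)) < oneMax (fun j => xor (y j) (m' j)) := by
  have hsucc : oneMax (fun j => xor (y j) (m' j)) = oneMax (fun j => xor (x j) (m' j)) + 1 :=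
    oneMax_eq_succ_of_eq_off (i := i) (by simp [hxi, hm']) (by simp [hyi, hm'])
      fun j hj => by rw [hxy j hj]
  exact hsucc ▸ Nat.lt_succ_of_le hle

section Probability

variable {Ω : Type*} [MeasurableSpace Ω] {μ : Measure Ω}

lemma measure_eq_false_eq_one_sub [IsProbabilityMeasure μ] {X : Ω → Bool} (hX : Measurable X) :
    μ {ω | X ω = false} = 1 - μ {ω | X ω = true} := by
  have hcompl : {ω | X ω = false} = (X ⁻¹' {true})ᶜ := by
    ext ω
    simp
  rw [hcompl, prob_compl_eq_one_sub (hX (measurableSet_singleton true))]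
  rfl

lemma map_eq_map_of_measure_eq_true [IsProbabilityMeasure μ] {X Y : Ω → Bool}
    (hX : Measurable X) (hY : Measurable Y) (h : μ {ω | X ω = true} = μ {ω | Y ω = true}) :
    μ.map X = μ.map Y := by
  refine Measure.ext_iff_singleton.2 fun b => ?_
  rw [Measure.map_apply hX (measurableSet_singleton b),
    Measure.map_apply hY (measurableSet_singleton b)]
  cases b
  · change μ {ω | X ω = false} = μ {ω | Y ω = false}
    rw [measure_eq_false_eq_one_sub hX, measure_eq_false_eq_one_sub hY, h]
  · exact h

lemma measure_eq_false_and_eq_false [IsProbabilityMeasure μ] {X Y : Ω → Bool}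
    (hX : Measurable X) (hY : Measurable Y) (hXY : IndepFun X Y μ) :
    μ {ω | X ω = false ∧ Y ω = false}
      = (1 - μ {ω | X ω = true}) * (1 - μ {ω | Y ω = true}) := by
  rw [← measure_eq_false_eq_one_sub hX, ← measure_eq_false_eq_one_sub hY]
  exact hXY.measure_inter_preimage_eq_mul _ _
    (measurableSet_singleton false) (measurableSet_singleton false)

theorem ProbabilityTheory.iIndepFun.map_perm_eq {ι α : Type*} [Fintype ι] [MeasurableSpace α]
    {X : ι → Ω → α} (hX : ∀ k, Measurable (X k)) (hind : iIndepFun X μ) {β : Measure α}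
    (hβ : ∀ k, μ.map (X k) = β) (e : Equiv.Perm ι) :
    μ.map (fun ω k => X (e k) ω) = μ.map (fun ω k => X k ω) := by
  rw [(hind.precomp e.injective).map_fun_eq_pi_map fun k => (hX _).aemeasurable,
    hind.map_fun_eq_pi_map fun k => (hX k).aemeasurable]
  simp only [hβ]

lemma map_prodMk_eq_map_swap_of_iIndepFun {ι α : Type*} [Fintype ι] [MeasurableSpace α]
    {U V : Ω → ι → α} (hU : ∀ j, Measurable fun ω => U ω j) (hV : ∀ j, Measurable fun ω => V ω j)
    (hind : iIndepFun (fun k ω => Sum.elim (U ω) (V ω) k) μ) {β : Measure α}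
    (hUβ : ∀ j, μ.map (fun ω => U ω j) = β) (hVβ : ∀ j, μ.map (fun ω => V ω j) = β) :
    μ.map (fun ω => (U ω, V ω)) = μ.map (fun ω => (V ω, U ω)) := by
  let split : (ι ⊕ ι → α) → (ι → α) × (ι → α) := fun z => (z ∘ Sum.inl, z ∘ Sum.inr)
  have hsplit : Measurable split := by fun_prop
  have hmeas : ∀ k, Measurable fun ω => Sum.elim (U ω) (V ω) k := Sum.rec hU hV
  have hswap := hind.map_perm_eq hmeas (Sum.rec hUβ hVβ) (Equiv.sumComm ι ι)
  calc μ.map (fun ω => (U ω, V ω))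
      = (μ.map fun ω k => Sum.elim (U ω) (V ω) k).map split := by
        rw [Measure.map_map hsplit (measurable_pi_lambda _ hmeas)]
        rfl
    _ = (μ.map fun ω k => Sum.elim (U ω) (V ω) (Equiv.sumComm ι ι k)).map split := by
        rw [hswap]
    _ = μ.map (fun ω => (V ω, U ω)) := by
        rw [Measure.map_map hsplit (measurable_pi_lambda _ fun k => hmeas _)]
        rfl

lemma measure_le_two_mul_of_map_swap_eq {α β : Type*} [MeasurableSpace α] [Countable α]
    [MeasurableSingletonClass α] [LinearOrder β] {U V : Ω → α} (hU : Measurable U)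
    (hV : Measurable V) (hswap : μ.map (fun ω => (U ω, V ω)) = μ.map (fun ω => (V ω, U ω)))
    (S : Set α) (f : α → β) :
    μ {ω | U ω ∈ S ∧ V ω ∈ S} ≤ 2 * μ {ω | U ω ∈ S ∧ V ω ∈ S ∧ f (U ω) ≤ f (V ω)} := by
  let T : Set (α × α) := {p | p.1 ∈ S ∧ p.2 ∈ S ∧ f p.1 ≤ f p.2}
  have hmirror : μ ((fun ω => (V ω, U ω)) ⁻¹' T) = μ ((fun ω => (U ω, V ω)) ⁻¹' T) := by
    rw [← Measure.map_apply (hV.prodMk hU) (.of_discrete), ← hswap,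
      Measure.map_apply (hU.prodMk hV) (.of_discrete)]
  calc μ {ω | U ω ∈ S ∧ V ω ∈ S}
      ≤ μ ((fun ω => (U ω, V ω)) ⁻¹' T ∪ (fun ω => (V ω, U ω)) ⁻¹' T) :=
        measure_mono fun ω ⟨hUS, hVS⟩ => (le_total (f (U ω)) (f (V ω))).imp
          (fun h => ⟨hUS, hVS, h⟩) (fun h => ⟨hVS, hUS, h⟩)
    _ ≤ μ ((fun ω => (U ω, V ω)) ⁻¹' T) + μ ((fun ω => (V ω, U ω)) ⁻¹' T) :=
        measure_union_le _ _
    _ = 2 * μ {ω | U ω ∈ S ∧ V ω ∈ S ∧ f (U ω) ≤ f (V ω)} := by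
        rw [hmirror, two_mul]
        rfl

end Probability

theorem stmt_17 {Ω : Type*} [MeasurableSpace Ω] (μ : Measure Ω) [IsProbabilityMeasure μ]
    (n : ℕ) (q : ℝ) (hq0 : 0 ≤ q) (hq1 : q < 1)
    (x y : Fin n → Bool) (i : Fin n)
    (hxi : x i = false) (hyi : y i = true) (hxy : ∀ j, j ≠ i → x j = y j)
    (mx my : Ω → Fin n → Bool)
    (hmx : ∀ j, Measurable fun ω => mx ω j) (hmy : ∀ j, Measurable fun ω => my ω j)
    (hind : iIndepFun
      (fun j ω => Sum.elim (mx ω) (my ω) j) μ)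
    (hpx : ∀ j, μ {ω | mx ω j = true} = ENNReal.ofReal q)
    (hpy : ∀ j, μ {ω | my ω j = true} = ENNReal.ofReal q) :
    ENNReal.ofReal ((1 - q) ^ 2 / 2) ≤
      μ {ω | oneMax (fun j => xor (x j) (mx ω j)) <
             oneMax (fun j => xor (y j) (my ω j))} := by
  let S : Set (Fin n → Bool) := {m | m i = false}
  let f : (Fin n → Bool) → ℕ := fun m => oneMax fun j => xor (x j) (m j)
  have hswap : μ.map (fun ω => (mx ω, my ω)) = μ.map (fun ω => (my ω, mx ω)) :=
    map_prodMk_eq_map_swap_of_iIndepFun hmx hmy hind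
      (fun j => map_eq_map_of_measure_eq_true (hmx j) (hmx i) (by rw [hpx, hpx]))
      (fun j => map_eq_map_of_measure_eq_true (hmy j) (hmx i) (by rw [hpy, hpx]))
  have hundisturbed : μ {ω | mx ω ∈ S ∧ my ω ∈ S} = (1 - ENNReal.ofReal q) ^ 2 := by
    have h := measure_eq_false_and_eq_false (hmx i) (hmy i) (hind.indepFun Sum.inl_ne_inr)
    rwa [hpx, hpy, ← sq] at h
  have hsub : {ω | mx ω ∈ S ∧ my ω ∈ S ∧ f (mx ω) ≤ f (my ω)} ⊆
      {ω | oneMax (fun j => xor (x j) (mx ω j)) < oneMax (fun j => xor (y j) (my ω j))} :=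
    fun _ ⟨_, hmyi, hle⟩ => oneMax_xor_lt_of_le hxi hyi hxy hmyi hle
  have hhalf : ENNReal.ofReal ((1 - q) ^ 2 / 2) = (1 - ENNReal.ofReal q) ^ 2 / 2 := by
    rw [ENNReal.ofReal_div_of_pos two_pos, ENNReal.ofReal_pow (by linarith),
      ENNReal.ofReal_sub 1 hq0, ENNReal.ofReal_one, ENNReal.ofReal_ofNat]
  rw [hhalf, ← hundisturbed]
  refine ENNReal.div_le_of_le_mul' ((measure_le_two_mul_of_map_swap_eq
    (measurable_pi_lambda _ hmx) (measurable_pi_lambda _ hmy) hswap S f).trans ?_)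
  gcongr
end
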